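/- arXiv:0710.1184 — 6 statements merged into one kernel-verified Lean document; each statement's English description precedes it below -/
import Mathlib

section
/- Let ρ and σ̃ be density matrices on ℂ^d ⊗ ℂ^d (with d ≥ 2), and define the geometric entanglement witness candidate C := σ̃ − ρ − Re⟨σ̃, σ̃ − ρ⟩·1_{d²}. If Re Tr(σ·C) ≥ 0 for every separable density matrix σ on ℂ^d ⊗ ℂ^d, then every separable density matrix σ satisfies ‖σ − ρ‖ ≥ ‖σ̃ − ρ‖ (the 'guess method': the witness property certifies that no separable state is closer to ρ than σ̃). -/
open Matrix Complex
open scoped Matrix Kronecker ComplexOrder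

noncomputable section

/-- A density matrix: Hermitian, positive semidefinite, trace 1. -/
def IsDensityMatrix {n : Type*} [Fintype n] [DecidableEq n] (ρ : Matrix n n ℂ) : Prop :=
  ρ.IsHermitian ∧ ρ.PosSemidef ∧ ρ.trace = 1

/-- A separable state on ℂ^d ⊗ ℂ^d : a finite convex combination of Kronecker
products of density matrices. -/
def IsSepState {d : ℕ} (ρ : Matrix (Fin d × Fin d) (Fin d × Fin d) ℂ) : Prop :=
  ∃ (K : ℕ) (p : Fin K → ℝ) (ρ₁ ρ₂ : Fin K → Matrix (Fin d) (Fin d) ℂ),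
    (∀ k, 0 ≤ p k) ∧ (∑ k, p k = 1) ∧
    (∀ k, IsDensityMatrix (ρ₁ k)) ∧ (∀ k, IsDensityMatrix (ρ₂ k)) ∧
    ρ = ∑ k, (p k : ℂ) • (ρ₁ k ⊗ₖ ρ₂ k)

/-- Hilbert–Schmidt inner product ⟨A,B⟩ = Tr(A†B). -/
def hsInner {n : Type*} [Fintype n] (A B : Matrix n n ℂ) : ℂ := (Aᴴ * B).trace

/-- Hilbert–Schmidt (Frobenius) norm ‖A‖ = √Tr(A†A). -/
def hsNorm {n : Type*} [Fintype n] (A : Matrix n n ℂ) : ℝ :=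
  Real.sqrt ((Aᴴ * A).trace.re)

/-- The Weyl operator U_{nm} on ℂ^d: (U_{nm})_{k,l} = exp(2πi k n / d) if l = (k+m) mod d. -/
def weyl (d : ℕ) (n m : Fin d) : Matrix (Fin d) (Fin d) ℂ :=
  Matrix.of fun k l =>
    if l = k + m then Complex.exp (2 * Real.pi * Complex.I * k.val * n.val / d) else 0

/-- The maximally entangled two-qutrit vector |φ⁺₃⟩. -/
def phiPlus3 : (Fin 3 × Fin 3) → ℂ :=
  fun p => if p.1 = p.2 then ((1 / Real.sqrt 3 : ℝ) : ℂ) else 0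

/-- The projector |φ⁺₃⟩⟨φ⁺₃|. -/
def projPhiPlus3 : Matrix (Fin 3 × Fin 3) (Fin 3 × Fin 3) ℂ :=
  vecMulVec phiPlus3 (star phiPlus3)

/-- The two-qutrit Bell projectors P_{nm}. -/
def bellP (n m : Fin 3) : Matrix (Fin 3 × Fin 3) (Fin 3 × Fin 3) ℂ :=
  (weyl 3 n m ⊗ₖ (1 : Matrix (Fin 3) (Fin 3) ℂ)) * projPhiPlus3 *
    (weyl 3 n m ⊗ₖ (1 : Matrix (Fin 3) (Fin 3) ℂ))ᴴ

/-- The three-parameter family of two-qutrit states ρ_{α,β,γ}. -/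
def rhoFam (α β γ : ℝ) : Matrix (Fin 3 × Fin 3) (Fin 3 × Fin 3) ℂ :=
  (((1 - α - β - γ) / 9 : ℝ) : ℂ) • (1 : Matrix (Fin 3 × Fin 3) (Fin 3 × Fin 3) ℂ) +
    (α : ℂ) • bellP 0 0 + ((β / 2 : ℝ) : ℂ) • (bellP 1 0 + bellP 2 0) +
    ((γ / 3 : ℝ) : ℂ) • (bellP 0 1 + bellP 1 1 + bellP 2 1)

/-- The operator U₁. -/
def opU1 : Matrix (Fin 3 × Fin 3) (Fin 3 × Fin 3) ℂ :=
  weyl 3 0 1 ⊗ₖ weyl 3 0 1 + weyl 3 0 2 ⊗ₖ weyl 3 0 2 + weyl 3 1 1 ⊗ₖ weyl 3 2 1 +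
    weyl 3 1 2 ⊗ₖ weyl 3 2 2 + weyl 3 2 1 ⊗ₖ weyl 3 1 1 + weyl 3 2 2 ⊗ₖ weyl 3 1 2

/-- The operator U₂ᴵ. -/
def opU2I : Matrix (Fin 3 × Fin 3) (Fin 3 × Fin 3) ℂ := weyl 3 1 0 ⊗ₖ weyl 3 2 0

/-- The operator U₂ᴵᴵ. -/
def opU2II : Matrix (Fin 3 × Fin 3) (Fin 3 × Fin 3) ℂ := weyl 3 2 0 ⊗ₖ weyl 3 1 0

/-- The operator U₂ = U₂ᴵ + U₂ᴵᴵ. -/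
def opU2 : Matrix (Fin 3 × Fin 3) (Fin 3 × Fin 3) ℂ := opU2I + opU2II

/-- σ₊ = (1/3)(|01⟩⟨01| + |12⟩⟨12| + |20⟩⟨20|). -/
def sigmaPlus : Matrix (Fin 3 × Fin 3) (Fin 3 × Fin 3) ℂ :=
  (1 / 3 : ℂ) • Matrix.diagonal (fun p => if p.2 = p.1 + 1 then 1 else 0)

/-- σ₋ = (1/3)(|10⟩⟨10| + |21⟩⟨21| + |02⟩⟨02|). -/
def sigmaMinus : Matrix (Fin 3 × Fin 3) (Fin 3 × Fin 3) ℂ :=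
  (1 / 3 : ℂ) • Matrix.diagonal (fun p => if p.1 = p.2 + 1 then 1 else 0)

/-- The Horodecki states ρ_b. -/
def horodecki (b : ℝ) : Matrix (Fin 3 × Fin 3) (Fin 3 × Fin 3) ℂ :=
  (2 / 7 : ℂ) • projPhiPlus3 + ((b / 7 : ℝ) : ℂ) • sigmaPlus +
    (((5 - b) / 7 : ℝ) : ℂ) • sigmaMinus

/-- Partial transpose in the second subsystem. -/
def ptB (ρ : Matrix (Fin 3 × Fin 3) (Fin 3 × Fin 3) ℂ) :
    Matrix (Fin 3 × Fin 3) (Fin 3 × Fin 3) ℂ :=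
  Matrix.of fun p q => ρ (p.1, q.2) (q.1, p.2)


lemma kron_conjTranspose {d : ℕ} (A B : Matrix (Fin d) (Fin d) ℂ) :
    (A ⊗ₖ B)ᴴ = Aᴴ ⊗ₖ Bᴴ := by
  ext i j
  simp [conjTranspose_apply, kroneckerMap_apply, star_mul', mul_comm]

lemma sep_herm {d : ℕ} {σ : Matrix (Fin d × Fin d) (Fin d × Fin d) ℂ}
    (h : IsSepState σ) : σ.IsHermitian := by
  obtain ⟨K, p, ρ₁, ρ₂, hp, hsum, h1, h2, rfl⟩ := h
  unfold Matrix.IsHermitian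
  rw [conjTranspose_sum]
  refine Finset.sum_congr rfl fun k _ => ?_
  rw [conjTranspose_smul, kron_conjTranspose, (h1 k).1.eq, (h2 k).1.eq]
  simp [Complex.star_def, Complex.conj_ofReal]

lemma sep_trace {d : ℕ} {σ : Matrix (Fin d × Fin d) (Fin d × Fin d) ℂ}
    (h : IsSepState σ) : σ.trace = 1 := by
  obtain ⟨K, p, ρ₁, ρ₂, hp, hsum, h1, h2, rfl⟩ := h
  rw [trace_sum]
  have : ∀ k, ((p k : ℂ) • (ρ₁ k ⊗ₖ ρ₂ k)).trace = (p k : ℂ) := by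
    intro k
    rw [trace_smul, trace_kronecker, (h1 k).2.2, (h2 k).2.2]
    simp
  simp only [this]
  rw [← Complex.ofReal_sum, hsum, Complex.ofReal_one]

lemma trace_conjTranspose_mul_self_re_nonneg {n : Type*} [Fintype n]
    (A : Matrix n n ℂ) : 0 ≤ ((Aᴴ * A).trace).re := by
  rw [Matrix.trace]
  simp only [Matrix.diag_apply, Matrix.mul_apply, conjTranspose_apply]
  rw [Complex.re_sum]
  refine Finset.sum_nonneg fun i _ => ?_
  rw [Complex.re_sum]
  refine Finset.sum_nonneg fun j _ => ?_
  have : (star (A j i) * A j i) = (Complex.normSq (A j i) : ℂ) := by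
    rw [Complex.star_def, mul_comm, Complex.mul_conj]
  rw [this]
  simp [Complex.normSq_nonneg]

/-- The guess method: if the geometric operator built from a candidate nearest separable
state σ̃ is an entanglement witness, then no separable state is closer to ρ than σ̃. -/
theorem stmt0 (d : ℕ) (hd : 2 ≤ d)
    (ρ σt : Matrix (Fin d × Fin d) (Fin d × Fin d) ℂ)
    (hρ : IsDensityMatrix ρ) (hσt : IsDensityMatrix σt)
    (C : Matrix (Fin d × Fin d) (Fin d × Fin d) ℂ)
    (hC : C = σt - ρ - (((hsInner σt (σt - ρ)).re : ℝ) : ℂ) • 1)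
    (hwit : ∀ σ : Matrix (Fin d × Fin d) (Fin d × Fin d) ℂ, IsSepState σ →
      0 ≤ ((σ * C).trace).re) :
    ∀ σ : Matrix (Fin d × Fin d) (Fin d × Fin d) ℂ, IsSepState σ →
      hsNorm (σt - ρ) ≤ hsNorm (σ - ρ) := by
  intro σ hσ
  have hσH := sep_herm hσ
  have hσT := sep_trace hσ
  set X := σ - σt with hX
  set Y := σt - ρ with hY
  have hXH : Xᴴ = X := (hσH.sub hσt.1).eq
  have hYH : Yᴴ = Y := (hσt.1.sub hρ.1).eq
  -- key: Re Tr(XᴴY) ≥ 0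
  have hkey : 0 ≤ ((Xᴴ * Y).trace).re := by
    have hw := hwit σ hσ
    rw [hC] at hw
    have hexp : (σ * (σt - ρ - (((hsInner σt (σt - ρ)).re : ℝ) : ℂ) • 1)).trace
        = (σ * Y).trace - (((hsInner σt Y).re : ℝ) : ℂ) * σ.trace := by
      rw [hY]
      simp only [Matrix.mul_sub, Matrix.trace_sub, Matrix.mul_smul, Matrix.mul_one,
        Matrix.trace_smul, smul_eq_mul]
    rw [hexp, hσT, mul_one] at hw
    have hinner : hsInner σt Y = (σt * Y).trace := by
      rw [hsInner, hσt.1.eq]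
    have hXY : (Xᴴ * Y).trace = (σ * Y).trace - (σt * Y).trace := by
      rw [hXH, hX, Matrix.sub_mul, Matrix.trace_sub]
    rw [hXY, Complex.sub_re]
    rw [Complex.sub_re, Complex.ofReal_re, hinner] at hw
    linarith
  -- norm decomposition
  have hdecomp : ((σ - ρ)ᴴ * (σ - ρ)).trace.re
      = (Xᴴ * X).trace.re + (Yᴴ * Y).trace.re + 2 * ((Xᴴ * Y).trace).re := by
    have hXY : σ - ρ = X + Y := by rw [hX, hY, sub_add_sub_cancel]
    rw [hXY, conjTranspose_add, Matrix.add_mul, Matrix.mul_add, Matrix.mul_add,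
      Matrix.trace_add, Matrix.trace_add, Matrix.trace_add]
    have hconj : (Yᴴ * X).trace = star ((Xᴴ * Y).trace) := by
      rw [← Matrix.trace_conjTranspose, Matrix.conjTranspose_mul,
        Matrix.conjTranspose_conjTranspose]
    rw [hconj]
    simp only [Complex.add_re, Complex.star_def, Complex.conj_re]
    ring
  have hx0 := trace_conjTranspose_mul_self_re_nonneg X
  have hle : (Yᴴ * Y).trace.re ≤ ((σ - ρ)ᴴ * (σ - ρ)).trace.re := by
    rw [hdecomp]; linarith
  exact Real.sqrt_le_sqrt hle


end
end

section
/- (Lemma 1.) Let d ≥ 2, let a ≥ 0 be a real number, and let c_{nm} ∈ ℂ for (n,m) ∈ {0,…,d−1}² with (n,m) ≠ (0,0) satisfy |c_{nm}| ≤ 1 for all such (n,m). Define the d²×d² matrix C := a·((d−1)·1_{d²} + Σ_{(n,m)≠(0,0)} c_{nm} · (U_{nm} ⊗ U_{(−n) mod d, m})), where ⊗ is the Kronecker product. Then every separable density matrix ρ on ℂ^d ⊗ ℂ^d satisfies Re Tr(ρ·C) ≥ 0. -/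
open Matrix Complex
open scoped Matrix Kronecker ComplexOrder

noncomputable section

/-! For a product state `σ₁ ⊗ σ₂` the expectation of `C` factorises as
`a ((d - 1) + ∑ c_{nm} Tr(σ₁ U_{nm}) Tr(σ₂ U_{-n,m}))`. The Weyl operators are orthogonal for the
Hilbert–Schmidt product with `Tr(U_{nm}† U_{nm}) = d`, so Parseval gives
`∑_{nm} |Tr(σ U_{nm})|² = d Tr(σ†σ) ≤ d` for a density matrix `σ`; the `(0,0)` term is `|Tr σ|² = 1`,
so the remaining terms sum to at most `d - 1`. By Cauchy–Schwarz the cross sum has modulus at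
most `d - 1`, and a separable state is a convex combination of product states. -/

open ComplexConjugate

lemma geom_sum_eq_ite_of_pow_eq_one {K : Type*} [Field K] [DecidableEq K] {z : K} {d : ℕ}
    (hz : z ^ d = 1) : ∑ i ∈ Finset.range d, z ^ i = if z = 1 then (d : K) else 0 := by
  split_ifs with h
  · simp [h]
  · rw [geom_sum_eq h, hz, sub_self, zero_div]

lemma Matrix.PosSemidef.normSq_apply_le {n : Type*} [Fintype n] {A : Matrix n n ℂ}
    (hA : A.PosSemidef) (i j : n) : normSq (A i j) ≤ (A i i).re * (A j j).re := by
  have h := (hA.submatrix ![i, j]).det_nonneg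
  rw [det_fin_two] at h
  simp only [Matrix.submatrix_apply, Matrix.cons_val_zero, Matrix.cons_val_one, sub_nonneg] at h
  rw [← hA.1.apply i j, ← hA.1.coe_re_apply_self i, ← hA.1.coe_re_apply_self j,
    Complex.star_def, ← Complex.normSq_eq_conj_mul_self, ← RCLike.ofReal_mul] at h
  rw [← hA.1.apply i j, Complex.star_def, Complex.normSq_conj]
  exact Complex.real_le_real.mp h

lemma IsDensityMatrix.sum_normSq_le_one {n : Type*} [Fintype n] [DecidableEq n]
    {ρ : Matrix n n ℂ} (hρ : IsDensityMatrix ρ) : ∑ i, ∑ j, normSq (ρ i j) ≤ 1 := by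
  obtain ⟨-, hpsd, htr⟩ := hρ
  have hre : ∑ i, (ρ i i).re = 1 := by
    simpa [Matrix.trace, Complex.re_sum] using congrArg re htr
  calc ∑ i, ∑ j, normSq (ρ i j) ≤ ∑ i, ∑ j, (ρ i i).re * (ρ j j).re :=
        Finset.sum_le_sum fun i _ => Finset.sum_le_sum fun j _ => hpsd.normSq_apply_le i j
    _ = 1 := by rw [← Finset.sum_mul_sum, hre, one_mul]

lemma trace_kronecker_mul_sum_smul_kronecker {R ι m n : Type*} [CommSemiring R] [Fintype m]
    [Fintype n] (σ₁ : Matrix m m R) (σ₂ : Matrix n n R) (s : Finset ι) (c : ι → R)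
    (A : ι → Matrix m m R) (B : ι → Matrix n n R) :
    ((σ₁ ⊗ₖ σ₂) * ∑ i ∈ s, c i • (A i ⊗ₖ B i)).trace =
      ∑ i ∈ s, c i * ((σ₁ * A i).trace * (σ₂ * B i).trace) := by
  simp only [Matrix.mul_sum, Matrix.trace_sum, Matrix.mul_smul, Matrix.trace_smul, smul_eq_mul,
    ← Matrix.mul_kronecker_mul, Matrix.trace_kronecker]

lemma IsSepState.re_trace_mul_nonneg {d : ℕ} {ρ C : Matrix (Fin d × Fin d) (Fin d × Fin d) ℂ}
    (hρ : IsSepState ρ)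
    (hC : ∀ σ₁ σ₂, IsDensityMatrix σ₁ → IsDensityMatrix σ₂ → 0 ≤ ((σ₁ ⊗ₖ σ₂) * C).trace.re) :
    0 ≤ (ρ * C).trace.re := by
  obtain ⟨K, p, ρ₁, ρ₂, hp, -, h₁, h₂, rfl⟩ := hρ
  simp only [Matrix.sum_mul, Matrix.trace_sum, Matrix.smul_mul, Matrix.trace_smul, smul_eq_mul,
    re_sum, re_ofReal_mul]
  exact Finset.sum_nonneg fun k _ => mul_nonneg (hp k) (hC _ _ (h₁ k) (h₂ k))

section Weyl

variable {d : ℕ}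

lemma weyl_zero_zero [NeZero d] : weyl d 0 0 = 1 := by
  ext k l
  simp [weyl, Matrix.one_apply, eq_comm]

lemma trace_mul_weyl (ρ : Matrix (Fin d) (Fin d) ℂ) (n m : Fin d) :
    (ρ * weyl d n m).trace =
      ∑ k : Fin d, ρ (k + m) k * exp (2 * Real.pi * I * k.val * n.val / d) := by
  simp only [Matrix.trace, Matrix.diag_apply, Matrix.mul_apply, weyl, Matrix.of_apply,
    mul_ite, mul_zero]
  rw [Finset.sum_comm]
  refine Finset.sum_congr rfl fun k _ => ?_
  simp

lemma sum_exp_mul_conj_exp [NeZero d] (k k' : Fin d) :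
    ∑ n : Fin d, exp (2 * Real.pi * I * k.val * n.val / d) *
        conj (exp (2 * Real.pi * I * k'.val * n.val / d)) =
      if k = k' then (d : ℂ) else 0 := by
  set ζ := exp (2 * Real.pi * I / d)
  have hζ : IsPrimitiveRoot ζ d := Complex.isPrimitiveRoot_exp d (NeZero.ne d)
  have hexp (j n : Fin d) : exp (2 * Real.pi * I * j.val * n.val / d) = (ζ ^ j.val) ^ n.val := by
    rw [← pow_mul, ← Complex.exp_nat_mul]
    push_cast
    ring_nf
  have hconj : conj ζ = ζ⁻¹ := by
    rw [← Complex.exp_conj, ← Complex.exp_neg]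
    congr 1
    simp only [map_div₀, map_mul, Complex.conj_ofReal, Complex.conj_I, map_natCast, map_ofNat]
    ring
  set z := ζ ^ k.val * (ζ ^ k'.val)⁻¹ with hz_def
  have hterm (n : Fin d) : exp (2 * Real.pi * I * k.val * n.val / d) *
      conj (exp (2 * Real.pi * I * k'.val * n.val / d)) = z ^ n.val := by
    rw [hexp, hexp, map_pow, map_pow, hconj]
    ring
  have hzd : z ^ d = 1 := by
    rw [mul_pow, inv_pow, ← pow_mul, ← pow_mul, mul_comm k.val, mul_comm k'.val, pow_mul,
      pow_mul, hζ.pow_eq_one, one_pow, one_pow, inv_one, mul_one]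
  have hz : z = 1 ↔ k = k' := by
    rw [hz_def, mul_inv_eq_one₀ (pow_ne_zero _ (hζ.ne_zero (NeZero.ne d)))]
    exact ⟨fun h => Fin.ext (hζ.pow_inj k.isLt k'.isLt h), fun h => h ▸ rfl⟩
  simp_rw [hterm]
  rw [Fin.sum_univ_eq_sum_range (fun i => z ^ i), geom_sum_eq_ite_of_pow_eq_one hzd]
  exact if_congr hz rfl rfl

lemma sum_normSq_sum_mul_exp [NeZero d] (f : Fin d → ℂ) :
    ∑ n : Fin d, normSq (∑ k : Fin d, f k * exp (2 * Real.pi * I * k.val * n.val / d)) =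
      d * ∑ k : Fin d, normSq (f k) := by
  apply ofReal_injective
  push_cast
  simp_rw [← mul_conj, map_sum, map_mul, Finset.sum_mul_sum, Finset.mul_sum]
  calc _ = ∑ k : Fin d, ∑ k' : Fin d, f k * conj (f k') *
        ∑ n : Fin d, exp (2 * Real.pi * I * k.val * n.val / d) *
          conj (exp (2 * Real.pi * I * k'.val * n.val / d)) := by
        rw [Finset.sum_comm]
        refine Finset.sum_congr rfl fun k _ => ?_
        rw [Finset.sum_comm]
        refine Finset.sum_congr rfl fun k' _ => ?_
        rw [Finset.mul_sum]
        exact Finset.sum_congr rfl fun n _ => by ring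
    _ = _ := by
        simp only [sum_exp_mul_conj_exp, mul_ite, mul_zero, Finset.sum_ite_eq,
          Finset.mem_univ, if_true]
        exact Finset.sum_congr rfl fun k _ => mul_comm _ _

lemma sum_normSq_trace_mul_weyl [NeZero d] (ρ : Matrix (Fin d) (Fin d) ℂ) :
    ∑ nm : Fin d × Fin d, normSq (ρ * weyl d nm.1 nm.2).trace =
      d * ∑ i : Fin d, ∑ j : Fin d, normSq (ρ i j) := by
  rw [Fintype.sum_prod_type, Finset.sum_comm]
  simp_rw [trace_mul_weyl, sum_normSq_sum_mul_exp, ← Finset.mul_sum]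
  rw [Finset.sum_comm]
  conv_rhs => rw [Finset.sum_comm]
  congr 1
  exact Finset.sum_congr rfl fun k _ => Fintype.sum_equiv (Equiv.addLeft k) _ _ fun _ => rfl

end Weyl

section WeylWitness

variable {d : ℕ} [NeZero d]

lemma IsDensityMatrix.sum_normSq_trace_mul_weyl_le {ρ : Matrix (Fin d) (Fin d) ℂ}
    (hρ : IsDensityMatrix ρ) : ∑ nm : Fin d × Fin d, normSq (ρ * weyl d nm.1 nm.2).trace ≤ d := by
  rw [sum_normSq_trace_mul_weyl]
  simpa using mul_le_mul_of_nonneg_left hρ.sum_normSq_le_one (Nat.cast_nonneg d)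

lemma IsDensityMatrix.sum_ne_zero_normSq_trace_mul_weyl_comp_le {ρ : Matrix (Fin d) (Fin d) ℂ}
    (hρ : IsDensityMatrix ρ) (e : Equiv.Perm (Fin d × Fin d)) (he : e (0, 0) = (0, 0)) :
    ∑ nm ∈ Finset.univ.filter (fun nm : Fin d × Fin d => nm ≠ (0, 0)),
      normSq (ρ * weyl d (e nm).1 (e nm).2).trace ≤ d - 1 := by
  rw [Finset.filter_ne', Finset.sum_erase_eq_sub (Finset.mem_univ _), he, weyl_zero_zero,
    Matrix.mul_one, hρ.2.2, normSq_one,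
    Equiv.sum_comp e (fun nm => normSq (ρ * weyl d nm.1 nm.2).trace)]
  linarith [hρ.sum_normSq_trace_mul_weyl_le]

lemma sum_norm_trace_mul_weyl_mul_norm_trace_mul_weyl_neg_le {σ₁ σ₂ : Matrix (Fin d) (Fin d) ℂ}
    (h₁ : IsDensityMatrix σ₁) (h₂ : IsDensityMatrix σ₂) :
    ∑ nm ∈ Finset.univ.filter (fun nm : Fin d × Fin d => nm ≠ (0, 0)),
      ‖(σ₁ * weyl d nm.1 nm.2).trace‖ * ‖(σ₂ * weyl d (-nm.1) nm.2).trace‖ ≤ d - 1 := by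
  have hd : (0 : ℝ) ≤ d - 1 := sub_nonneg.mpr (Nat.one_le_cast.mpr NeZero.one_le)
  have b₁ := h₁.sum_ne_zero_normSq_trace_mul_weyl_comp_le (Equiv.refl _) rfl
  have b₂ := h₂.sum_ne_zero_normSq_trace_mul_weyl_comp_le
    ((Equiv.neg _).prodCongr (Equiv.refl _)) (by simp)
  simp only [Equiv.refl_apply, Equiv.prodCongr_apply, Prod.map, Equiv.neg_apply,
    ← Complex.sq_norm] at b₁ b₂
  calc _ ≤ √(∑ nm ∈ Finset.univ.filter (fun nm : Fin d × Fin d => nm ≠ (0, 0)),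
          ‖(σ₁ * weyl d nm.1 nm.2).trace‖ ^ 2) *
        √(∑ nm ∈ Finset.univ.filter (fun nm : Fin d × Fin d => nm ≠ (0, 0)),
          ‖(σ₂ * weyl d (-nm.1) nm.2).trace‖ ^ 2) := Real.sum_mul_le_sqrt_mul_sqrt _ _ _
    _ ≤ √(d - 1) * √(d - 1) := by gcongr
    _ = d - 1 := Real.mul_self_sqrt hd

def weylWitness (d : ℕ) [NeZero d] (a : ℝ) (c : Fin d × Fin d → ℂ) :
    Matrix (Fin d × Fin d) (Fin d × Fin d) ℂ :=
  (a : ℂ) • (((d : ℂ) - 1) • 1 +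
    ∑ nm ∈ Finset.univ.filter (fun nm : Fin d × Fin d => nm ≠ (0, 0)),
      c nm • (weyl d nm.1 nm.2 ⊗ₖ weyl d (-nm.1) nm.2))

lemma trace_kronecker_mul_weylWitness (a : ℝ) (c : Fin d × Fin d → ℂ)
    {σ₁ σ₂ : Matrix (Fin d) (Fin d) ℂ} (h₁ : σ₁.trace = 1) (h₂ : σ₂.trace = 1) :
    ((σ₁ ⊗ₖ σ₂) * weylWitness d a c).trace =
      a * ((d - 1) + ∑ nm ∈ Finset.univ.filter (fun nm : Fin d × Fin d => nm ≠ (0, 0)),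
        c nm * ((σ₁ * weyl d nm.1 nm.2).trace * (σ₂ * weyl d (-nm.1) nm.2).trace)) := by
  rw [weylWitness, Matrix.mul_smul, Matrix.trace_smul, Matrix.mul_add, Matrix.trace_add,
    Matrix.mul_smul, Matrix.mul_one, Matrix.trace_smul, Matrix.trace_kronecker, h₁, h₂,
    trace_kronecker_mul_sum_smul_kronecker, smul_eq_mul, smul_eq_mul, mul_one, mul_one]

lemma re_trace_kronecker_mul_weylWitness_nonneg {a : ℝ} (ha : 0 ≤ a) {c : Fin d × Fin d → ℂ}
    (hc : ∀ nm : Fin d × Fin d, nm ≠ (0, 0) → ‖c nm‖ ≤ 1) {σ₁ σ₂ : Matrix (Fin d) (Fin d) ℂ}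
    (h₁ : IsDensityMatrix σ₁) (h₂ : IsDensityMatrix σ₂) :
    0 ≤ ((σ₁ ⊗ₖ σ₂) * weylWitness d a c).trace.re := by
  rw [trace_kronecker_mul_weylWitness a c h₁.2.2 h₂.2.2, re_ofReal_mul]
  refine mul_nonneg ha ?_
  set S := ∑ nm ∈ Finset.univ.filter (fun nm : Fin d × Fin d => nm ≠ (0, 0)),
    c nm * ((σ₁ * weyl d nm.1 nm.2).trace * (σ₂ * weyl d (-nm.1) nm.2).trace)
  have hS : ‖S‖ ≤ d - 1 := calc
    ‖S‖ ≤ ∑ nm ∈ Finset.univ.filter (fun nm : Fin d × Fin d => nm ≠ (0, 0)),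
        ‖c nm * ((σ₁ * weyl d nm.1 nm.2).trace * (σ₂ * weyl d (-nm.1) nm.2).trace)‖ :=
      norm_sum_le _ _
    _ ≤ ∑ nm ∈ Finset.univ.filter (fun nm : Fin d × Fin d => nm ≠ (0, 0)),
        ‖(σ₁ * weyl d nm.1 nm.2).trace‖ * ‖(σ₂ * weyl d (-nm.1) nm.2).trace‖ := by
      refine Finset.sum_le_sum fun nm hnm => ?_
      rw [norm_mul, norm_mul]
      exact mul_le_of_le_one_left (by positivity) (hc nm (Finset.mem_filter.mp hnm).2)
    _ ≤ d - 1 := sum_norm_trace_mul_weyl_mul_norm_trace_mul_weyl_neg_le h₁ h₂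
  have hre := neg_le_of_abs_le ((abs_re_le_norm S).trans hS)
  simp only [add_re, sub_re, natCast_re, one_re]
  linarith

end WeylWitness

theorem stmt3_general (d : ℕ) [NeZero d] (a : ℝ) (ha : 0 ≤ a)
    (c : Fin d × Fin d → ℂ)
    (hc : ∀ nm : Fin d × Fin d, nm ≠ (0, 0) → ‖c nm‖ ≤ 1)
    (C : Matrix (Fin d × Fin d) (Fin d × Fin d) ℂ)
    (hC : C = (a : ℂ) • (((d : ℂ) - 1) • (1 : Matrix (Fin d × Fin d) (Fin d × Fin d) ℂ) +
      ∑ nm ∈ Finset.univ.filter (fun nm : Fin d × Fin d => nm ≠ (0, 0)),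
        c nm • (weyl d nm.1 nm.2 ⊗ₖ weyl d (-nm.1) nm.2))) :
    ∀ ρ : Matrix (Fin d × Fin d) (Fin d × Fin d) ℂ, IsSepState ρ →
      0 ≤ ((ρ * C).trace).re := by
  intro ρ hρ
  subst hC
  exact hρ.re_trace_mul_nonneg fun _ _ h₁ h₂ =>
    re_trace_kronecker_mul_weylWitness_nonneg ha hc h₁ h₂

/-- Lemma 1: operators of the Weyl form with small coefficients have nonnegative
expectation value on all separable states. -/
theorem stmt3 (d : ℕ) [NeZero d] (hd : 2 ≤ d) (a : ℝ) (ha : 0 ≤ a)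
    (c : Fin d × Fin d → ℂ)
    (hc : ∀ nm : Fin d × Fin d, nm ≠ (0, 0) → ‖c nm‖ ≤ 1)
    (C : Matrix (Fin d × Fin d) (Fin d × Fin d) ℂ)
    (hC : C = (a : ℂ) • (((d : ℂ) - 1) • (1 : Matrix (Fin d × Fin d) (Fin d × Fin d) ℂ) +
      ∑ nm ∈ Finset.univ.filter (fun nm : Fin d × Fin d => nm ≠ (0, 0)),
        c nm • (weyl d nm.1 nm.2 ⊗ₖ weyl d (-nm.1) nm.2))) :
    ∀ ρ : Matrix (Fin d × Fin d) (Fin d × Fin d) ℂ, IsSepState ρ →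
      0 ≤ ((ρ * C).trace).re :=
  stmt3_general d a ha c hc C hC

end
end

section
/- Let α, β be real with 5β/4 > α + 1/2, set ρ := ρ_{α,β,0} and σ̃ := ρ_{(−2+20α+5β)/24, (2+4α+β)/6, 0}. Then the normalized geometric operator satisfies the identity (1/‖σ̃ − ρ‖)·(σ̃ − ρ − Re⟨σ̃, σ̃ − ρ⟩·1₉) = (1/(6√2))·(2·1₉ + U₁ − U₂) as 9×9 complex matrices (the witness C_II for region II in Weyl form). -/
open Matrix Complex
open scoped Matrix Kronecker ComplexOrder

noncomputable section

/-!
All matrices involved lie in the commutative algebra spanned by `1`, the projector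
`P = |φ⁺⟩⟨φ⁺|` and the projector `K = ∑ⱼ |jj⟩⟨jj| = P₀₀ + P₁₀ + P₂₀`, where `P² = P`, `K² = K` and
`PK = KP = P`. There `ρ_{α,β,0} = (1 - α - β)/9 + (α - β/2) P + (β/2) K`, `U₁ = 9P - 3K` and
`U₂ = 3K - 1`, so `σ̃ - ρ = t/72 · (1 + 9P - 6K)` with `t = 5β - 4α - 2 > 0`. The geometric
operator does not change when `σ̃ - ρ` is scaled by a positive number, and the remaining
Hilbert–Schmidt data are `‖1 + 9P - 6K‖² = 72` and `⟨σ̃, 1 + 9P - 6K⟩ = -2`.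
-/

section HilbertSchmidt

variable {n : Type*} [Fintype n]

lemma re_hsInner_smul_right (A B : Matrix n n ℂ) (c : ℝ) :
    (hsInner A (c • B)).re = c * (hsInner A B).re := by
  rw [hsInner, hsInner, Matrix.mul_smul, trace_smul, Complex.smul_re, smul_eq_mul]

lemma hsNorm_smul (A : Matrix n n ℂ) (c : ℝ) : hsNorm (c • A) = |c| * hsNorm A := by
  rw [hsNorm, hsNorm, conjTranspose_smul, star_trivial, Matrix.smul_mul, Matrix.mul_smul,
    trace_smul, trace_smul, smul_smul, Complex.smul_re, smul_eq_mul,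
    Real.sqrt_mul (mul_self_nonneg c), Real.sqrt_mul_self_eq_abs]

variable [DecidableEq n]

/-- The normalized geometric operator of the paper, with `A = σ̃ - ρ`. -/
def geometricOperator (σ A : Matrix n n ℂ) : Matrix n n ℂ :=
  (1 / hsNorm A) • (A - (((hsInner σ A).re : ℝ) : ℂ) • 1)

lemma geometricOperator_smul (σ A : Matrix n n ℂ) {c : ℝ} (hc : 0 < c) :
    geometricOperator σ (c • A) = geometricOperator σ A := by
  have hscale : (1 / (c * hsNorm A)) * c = 1 / hsNorm A := by
    rw [one_div, mul_inv, mul_right_comm, inv_mul_cancel₀ hc.ne', one_mul, one_div]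
  have hfactor : c • A - ((c : ℂ) * (hsInner σ A).re) • (1 : Matrix n n ℂ) =
      c • (A - ((hsInner σ A).re : ℂ) • 1) := by
    rw [smul_sub, mul_smul, Complex.coe_smul]
  rw [geometricOperator, geometricOperator, hsNorm_smul, re_hsInner_smul_right, abs_of_pos hc,
    Complex.ofReal_mul, hfactor, smul_smul, hscale]

end HilbertSchmidt

def zeta3 : ℂ := Complex.exp (2 * Real.pi * Complex.I / 3)

lemma isPrimitiveRoot_zeta3 : IsPrimitiveRoot zeta3 3 := by
  simpa [zeta3] using Complex.isPrimitiveRoot_exp 3 (by norm_num)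

lemma zeta3_pow_three : zeta3 ^ 3 = 1 := isPrimitiveRoot_zeta3.pow_eq_one

lemma one_add_zeta3_add_sq : 1 + zeta3 + zeta3 ^ 2 = 0 := by
  simpa [Finset.sum_range_succ] using isPrimitiveRoot_zeta3.geom_sum_eq_zero (by norm_num)

lemma star_zeta3 : star zeta3 = zeta3 ^ 2 := by
  have hconj :
      (starRingEnd ℂ) (2 * Real.pi * Complex.I / 3) = -(2 * Real.pi * Complex.I / 3) := by
    rw [map_div₀, map_mul, map_mul, Complex.conj_ofReal, Complex.conj_I, map_ofNat, map_ofNat]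
    ring
  rw [Complex.star_def, zeta3, ← Complex.exp_conj, hconj, Complex.exp_neg, ← zeta3]
  exact inv_eq_of_mul_eq_one_right (by rw [← pow_succ', zeta3_pow_three])

lemma weyl_three_apply (n m k l : Fin 3) :
    weyl 3 n m k l = if l = k + m then zeta3 ^ (k.val * n.val) else 0 := by
  rw [weyl, of_apply, zeta3, ← Complex.exp_nat_mul]
  push_cast
  ring_nf

lemma weyl_three_eq_diagonal (n : Fin 3) :
    weyl 3 n 0 = diagonal fun k => zeta3 ^ (k.val * n.val) := by
  ext k l
  simp [weyl_three_apply, diagonal_apply, eq_comm]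

def projCorr3 : Matrix (Fin 3 × Fin 3) (Fin 3 × Fin 3) ℂ :=
  diagonal fun p => if p.1 = p.2 then 1 else 0

lemma projPhiPlus3_apply (p q : Fin 3 × Fin 3) :
    projPhiPlus3 p q = if p.1 = p.2 ∧ q.1 = q.2 then 1 / 3 else 0 := by
  have h : ((1 / √3 : ℝ) : ℂ) * ((1 / √3 : ℝ) : ℂ) = 1 / 3 := by
    rw [← Complex.ofReal_mul, div_mul_div_comm, one_mul, Real.mul_self_sqrt (by norm_num)]
    norm_num
  simp only [projPhiPlus3, phiPlus3, vecMulVec_apply, Pi.star_apply]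
  split_ifs <;> simp_all

lemma star_phiPlus3_dotProduct : star phiPlus3 ⬝ᵥ phiPlus3 = 1 := by
  simp only [dotProduct, Pi.star_apply, phiPlus3, one_div, ofReal_inv, RCLike.star_def, mul_ite,
    mul_zero, Fintype.sum_prod_type, Finset.sum_ite_eq, Finset.mem_univ, ↓reduceIte, map_inv₀,
    conj_ofReal, Finset.sum_const, Finset.card_univ, Fintype.card_fin, nsmul_eq_mul, Nat.cast_ofNat]
  rw [← mul_inv, ← Complex.ofReal_mul, Real.mul_self_sqrt (by norm_num)]
  norm_num

lemma projPhiPlus3_mul_self : projPhiPlus3 * projPhiPlus3 = projPhiPlus3 := by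
  rw [projPhiPlus3, vecMulVec_mul_vecMulVec, star_phiPlus3_dotProduct, one_smul]

lemma projCorr3_mul_projPhiPlus3 : projCorr3 * projPhiPlus3 = projPhiPlus3 := by
  ext p q
  by_cases hp : p.1 = p.2 <;> simp [projCorr3, diagonal_mul, projPhiPlus3_apply, hp]

lemma projPhiPlus3_mul_projCorr3 : projPhiPlus3 * projCorr3 = projPhiPlus3 := by
  ext p q
  by_cases hq : q.1 = q.2 <;> simp [projCorr3, mul_diagonal, projPhiPlus3_apply, hq]

lemma projCorr3_mul_self : projCorr3 * projCorr3 = projCorr3 := by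
  simp [projCorr3, diagonal_mul_diagonal]

lemma conjTranspose_projPhiPlus3 : projPhiPlus3ᴴ = projPhiPlus3 := by
  rw [projPhiPlus3, conjTranspose_vecMulVec, star_star]

lemma conjTranspose_projCorr3 : projCorr3ᴴ = projCorr3 := by
  simp [projCorr3, diagonal_conjTranspose]

lemma trace_projPhiPlus3 : projPhiPlus3.trace = 1 := by
  rw [projPhiPlus3, trace_vecMulVec, dotProduct_comm, star_phiPlus3_dotProduct]

lemma trace_projCorr3 : projCorr3.trace = 3 := by
  simp only [projCorr3, trace_diagonal, Finset.sum_boole]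
  rfl

lemma bellP_zero_apply (n : Fin 3) (p q : Fin 3 × Fin 3) :
    bellP n 0 p q =
      zeta3 ^ (p.1.val * n.val) * projPhiPlus3 p q * star (zeta3 ^ (q.1.val * n.val)) := by
  rw [bellP, weyl_three_eq_diagonal, ← diagonal_one, diagonal_kronecker_diagonal,
    diagonal_conjTranspose, mul_diagonal, diagonal_mul]
  simp

lemma bellP_zero_zero : bellP 0 0 = projPhiPlus3 := by
  ext p q
  simp [bellP_zero_apply]

lemma bellP_one_zero_add_bellP_two_zero : bellP 1 0 + bellP 2 0 = projCorr3 - projPhiPlus3 := by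
  ext ⟨i, j⟩ ⟨k, l⟩
  fin_cases i <;> fin_cases j <;> fin_cases k <;> fin_cases l <;>
    simp [bellP_zero_apply, projPhiPlus3_apply, projCorr3, star_zeta3] <;>
    grind [zeta3_pow_three, one_add_zeta3_add_sq]

lemma opU1_eq : opU1 = (9 : ℂ) • projPhiPlus3 - (3 : ℂ) • projCorr3 := by
  ext ⟨i, j⟩ ⟨k, l⟩
  fin_cases i <;> fin_cases j <;> fin_cases k <;> fin_cases l <;>
    simp [opU1, weyl_three_apply, projPhiPlus3_apply, projCorr3] <;>
    grind [zeta3_pow_three, one_add_zeta3_add_sq]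

lemma opU2_eq : opU2 = (3 : ℂ) • projCorr3 - 1 := by
  ext ⟨i, j⟩ ⟨k, l⟩
  fin_cases i <;> fin_cases j <;> fin_cases k <;> fin_cases l <;>
    simp [opU2, opU2I, opU2II, weyl_three_apply, projCorr3, one_apply] <;>
    grind [zeta3_pow_three, one_add_zeta3_add_sq]

def pkComb (x y z : ℂ) : Matrix (Fin 3 × Fin 3) (Fin 3 × Fin 3) ℂ :=
  x • 1 + y • projPhiPlus3 + z • projCorr3

lemma rhoFam_zero_eq_pkComb (a b : ℝ) :
    rhoFam a b 0 = pkComb ((1 - a - b) / 9 : ℝ) (a - b / 2 : ℝ) (b / 2 : ℝ) := by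
  rw [rhoFam, bellP_zero_zero, bellP_one_zero_add_bellP_two_zero, pkComb]
  simp only [sub_zero, zero_div, Complex.ofReal_zero, zero_smul, add_zero]
  push_cast
  module

lemma hsInner_pkComb (x y z x' y' z' : ℂ) :
    hsInner (pkComb x y z) (pkComb x' y' z') =
      9 * (star x * x') + (star x * y' + star y * x' + star y * y' + star y * z' + star z * y') +
        3 * (star x * z' + star z * x' + star z * z') := by
  simp only [hsInner, pkComb, conjTranspose_add, conjTranspose_smul, conjTranspose_one,
    conjTranspose_projPhiPlus3, conjTranspose_projCorr3, add_mul, mul_add, Matrix.smul_mul,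
    Matrix.mul_smul, Matrix.one_mul, Matrix.mul_one, projPhiPlus3_mul_self, projCorr3_mul_self,
    projPhiPlus3_mul_projCorr3, projCorr3_mul_projPhiPlus3, trace_add, trace_smul, trace_one,
    trace_projPhiPlus3, trace_projCorr3, Fintype.card_prod, Fintype.card_fin, smul_eq_mul]
  push_cast
  ring

/-- The witness C_II for region II in Weyl form. -/
theorem stmt8 (α β : ℝ) (hβ : α + 1 / 2 < 5 * β / 4)
    (ρ σt : Matrix (Fin 3 × Fin 3) (Fin 3 × Fin 3) ℂ)
    (hρ : ρ = rhoFam α β 0)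
    (hσt : σt = rhoFam ((-2 + 20 * α + 5 * β) / 24) ((2 + 4 * α + β) / 6) 0) :
    (1 / hsNorm (σt - ρ)) • (σt - ρ - (((hsInner σt (σt - ρ)).re : ℝ) : ℂ) • 1)
      = ((1 / (6 * Real.sqrt 2) : ℝ) : ℂ) •
        (2 • (1 : Matrix (Fin 3 × Fin 3) (Fin 3 × Fin 3) ℂ) + opU1 - opU2) := by
  have hdiff : σt - ρ = ((5 * β - 4 * α - 2) / 72) • pkComb 1 9 (-6) := by
    rw [hρ, hσt, rhoFam_zero_eq_pkComb, rhoFam_zero_eq_pkComb, pkComb, pkComb, pkComb,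
      ← Complex.coe_smul]
    push_cast
    match_scalars <;> ring
  have hnormSq : hsInner (pkComb 1 9 (-6)) (pkComb 1 9 (-6)) = ((6 * √2) ^ 2 : ℝ) := by
    rw [hsInner_pkComb, mul_pow, Real.sq_sqrt zero_le_two]
    norm_num
  have hnorm : hsNorm (pkComb 1 9 (-6)) = 6 * √2 := by
    change √((hsInner (pkComb 1 9 (-6)) (pkComb 1 9 (-6))).re) = _
    rw [hnormSq, Complex.ofReal_re, Real.sqrt_sq (by positivity)]
  have hinner : hsInner σt (pkComb 1 9 (-6)) = ((-2 : ℝ) : ℂ) := by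
    rw [hσt, rhoFam_zero_eq_pkComb, hsInner_pkComb]
    simp only [Complex.star_def, Complex.conj_ofReal]
    push_cast
    ring
  have hU : pkComb 1 9 (-6) - ((-2 : ℝ) : ℂ) • 1 =
      2 • (1 : Matrix (Fin 3 × Fin 3) (Fin 3 × Fin 3) ℂ) + opU1 - opU2 := by
    rw [opU1_eq, opU2_eq, pkComb]
    push_cast
    module
  change geometricOperator σt (σt - ρ) = _
  rw [hdiff, geometricOperator_smul _ _ (by linarith), geometricOperator, hnorm, hinner,
    Complex.ofReal_re, hU, Complex.coe_smul]

end
end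

section
/- (Hilbert–Schmidt measure in region II.) For all real α, β with 5β/4 ≥ α + 1/2, every separable density matrix σ on ℂ³ ⊗ ℂ³ satisfies ‖σ − ρ_{α,β,0}‖ ≥ (√2/3)·(5β/4 − α − 1/2); in particular, if 5β/4 > α + 1/2 then ρ_{α,β,0} is not separable. -/
open Matrix Complex
open scoped Matrix Kronecker ComplexOrder

noncomputable section

/-!
`W = 2 Q - 3 P - 1/3`, with `Q` the projector onto `span {|jj⟩}` and `P = |φ⁺⟩⟨φ⁺|`, is an
entanglement witness. On a product state, `⟨W, a ⊗ b⟩ = 2 ∑ⱼ aⱼⱼ bⱼⱼ - ∑ⱼₖ aⱼₖ bⱼₖ - 1/3`; the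
`2 × 2` principal minors of `a` and `b` give `|aⱼₖ bⱼₖ| ≤ xⱼ xₖ` with `xⱼ = √(aⱼⱼ bⱼⱼ)`, so this
is at most `(∑ⱼ xⱼ)² - 1/3 ≤ 2/3` by Cauchy–Schwarz, and by convexity the same bound holds on
every separable state. Since `P₁₀ + P₂₀ = Q - P`, one computes `⟨W, ρ_{α,β,0}⟩ = (5β - 4α)/3` and
`‖W‖ = 2√2`, and Cauchy–Schwarz for the Hilbert–Schmidt inner product turns the gap
`(5β - 4α)/3 - 2/3` into the lower bound `‖σ - ρ_{α,β,0}‖ ≥ ((5β - 4α)/3 - 2/3) / (2√2)`.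
-/

section HilbertSchmidt

variable {n : Type*} [Fintype n]

lemma re_hsInner_le_hsNorm_mul_hsNorm (A B : Matrix n n ℂ) :
    (hsInner A B).re ≤ hsNorm A * hsNorm B := by
  let flatten (M : Matrix n n ℂ) : EuclideanSpace ℂ (n × n) := WithLp.toLp 2 fun p => M p.1 p.2
  have hinner : hsInner A B = inner ℂ (flatten A) (flatten B) := by
    simp only [hsInner, Matrix.trace, Matrix.diag, Matrix.mul_apply, Matrix.conjTranspose_apply,
      PiLp.inner_apply, RCLike.inner_apply, Fintype.sum_prod_type, flatten]
    rw [Finset.sum_comm]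
    simp only [mul_comm, RCLike.star_def]
  have hnorm (M : Matrix n n ℂ) : hsNorm M = ‖flatten M‖ := by
    simp only [hsNorm, EuclideanSpace.norm_eq, Matrix.trace, Matrix.diag, Matrix.mul_apply,
      Matrix.conjTranspose_apply, Fintype.sum_prod_type, flatten, Complex.re_sum]
    rw [Finset.sum_comm]
    simp [Complex.sq_norm, Complex.normSq_apply]
  rw [hinner, hnorm, hnorm]
  exact re_inner_le_norm (𝕜 := ℂ) _ _

lemma hsInner_sub_right (A B C : Matrix n n ℂ) :
    hsInner A (B - C) = hsInner A B - hsInner A C := by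
  rw [hsInner, hsInner, hsInner, Matrix.mul_sub, Matrix.trace_sub]

lemma hsInner_sum_smul_right {ι : Type*} (s : Finset ι) (A : Matrix n n ℂ) (c : ι → ℂ)
    (X : ι → Matrix n n ℂ) : hsInner A (∑ i ∈ s, c i • X i) = ∑ i ∈ s, c i * hsInner A (X i) := by
  simp only [hsInner, Matrix.mul_sum, Matrix.mul_smul, Matrix.trace_sum, Matrix.trace_smul,
    smul_eq_mul]

lemma hsNorm_sub_comm (A B : Matrix n n ℂ) : hsNorm (A - B) = hsNorm (B - A) := by
  rw [hsNorm, hsNorm, ← neg_sub B A, Matrix.conjTranspose_neg, Matrix.neg_mul, Matrix.mul_neg,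
    neg_neg]

end HilbertSchmidt

section Separable

variable {d : ℕ} {W σ : Matrix (Fin d × Fin d) (Fin d × Fin d) ℂ} {c : ℝ}

lemma IsSepState.re_hsInner_le
    (hW : ∀ a b : Matrix (Fin d) (Fin d) ℂ, IsDensityMatrix a → IsDensityMatrix b →
      (hsInner W (a ⊗ₖ b)).re ≤ c)
    (hσ : IsSepState σ) : (hsInner W σ).re ≤ c := by
  obtain ⟨K, p, ρ₁, ρ₂, hp_nonneg, hp_sum, hρ₁, hρ₂, rfl⟩ := hσ
  calc (hsInner W (∑ k, (p k : ℂ) • (ρ₁ k ⊗ₖ ρ₂ k))).re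
      = ∑ k, p k * (hsInner W (ρ₁ k ⊗ₖ ρ₂ k)).re := by
        simp only [hsInner_sum_smul_right, Complex.re_sum, Complex.re_ofReal_mul]
    _ ≤ ∑ k, p k * c := Finset.sum_le_sum fun k _ =>
        mul_le_mul_of_nonneg_left (hW _ _ (hρ₁ k) (hρ₂ k)) (hp_nonneg k)
    _ = c := by rw [← Finset.sum_mul, hp_sum, one_mul]

lemma IsSepState.re_hsInner_sub_le_hsNorm_mul
    (hW : ∀ a b : Matrix (Fin d) (Fin d) ℂ, IsDensityMatrix a → IsDensityMatrix b →
      (hsInner W (a ⊗ₖ b)).re ≤ c)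
    (hσ : IsSepState σ) (ρ : Matrix (Fin d × Fin d) (Fin d × Fin d) ℂ) :
    (hsInner W ρ).re - c ≤ hsNorm W * hsNorm (σ - ρ) :=
  calc (hsInner W ρ).re - c ≤ (hsInner W ρ).re - (hsInner W σ).re := by
        linarith [hσ.re_hsInner_le hW]
    _ = (hsInner W (ρ - σ)).re := by rw [hsInner_sub_right, Complex.sub_re]
    _ ≤ hsNorm W * hsNorm (σ - ρ) := by
        rw [← hsNorm_sub_comm]
        exact re_hsInner_le_hsNorm_mul_hsNorm _ _

end Separable

section PosSemidef

variable {n : Type*} {a b : Matrix n n ℂ}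

lemma Matrix.PosSemidef.norm_apply_le (ha : a.PosSemidef) (j k : n) :
    ‖a j k‖ ≤ √(a j j).re * √(a k k).re := by
  have hdet := (ha.submatrix ![j, k]).det_nonneg
  rw [Matrix.det_fin_two] at hdet
  simp only [Matrix.submatrix_apply, Matrix.cons_val_zero, Matrix.cons_val_one] at hdet
  rw [← ha.isHermitian.apply k j, ← ha.isHermitian.coe_re_apply_self j,
    ← ha.isHermitian.coe_re_apply_self k, Complex.star_def, Complex.mul_conj,
    Complex.normSq_eq_norm_sq] at hdet
  simp only [RCLike.re_to_complex] at hdet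
  have hsq : ‖a j k‖ ^ 2 ≤ (a j j).re * (a k k).re :=
    Complex.real_le_real.mp (by rw [Complex.ofReal_mul]; exact sub_nonneg.mp hdet)
  rw [← Real.sqrt_mul (Complex.nonneg_iff.mp ha.diag_nonneg).1]
  exact Real.le_sqrt_of_sq_le hsq

variable [Fintype n]

lemma Matrix.PosSemidef.re_two_sum_diag_mul_sub_sum_mul_le (ha : a.PosSemidef)
    (hb : b.PosSemidef) :
    (2 * ∑ j, a j j * b j j - ∑ j, ∑ k, a j k * b j k).re ≤ a.trace.re * b.trace.re := by
  classical
  set x : n → ℝ := fun j => √(a j j).re * √(b j j).re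
  have hx_sq (j : n) : x j * x j = (a j j * b j j).re := by
    rw [Complex.mul_re, ← (Complex.nonneg_iff.mp ha.diag_nonneg).2,
      ← (Complex.nonneg_iff.mp hb.diag_nonneg).2, zero_mul, sub_zero, mul_mul_mul_comm,
      Real.mul_self_sqrt (Complex.nonneg_iff.mp ha.diag_nonneg).1,
      Real.mul_self_sqrt (Complex.nonneg_iff.mp hb.diag_nonneg).1]
  have hterm (j k : n) :
      (if j = k then 2 * (a j j * b j j).re else 0) - (a j k * b j k).re ≤ x j * x k := by
    by_cases hjk : j = k
    · subst hjk
      rw [if_pos rfl, ← hx_sq]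
      linarith
    · rw [if_neg hjk, zero_sub]
      calc -(a j k * b j k).re ≤ ‖a j k * b j k‖ := (neg_le_abs _).trans (Complex.abs_re_le_norm _)
        _ = ‖a j k‖ * ‖b j k‖ := norm_mul _ _
        _ ≤ (√(a j j).re * √(a k k).re) * (√(b j j).re * √(b k k).re) :=
          mul_le_mul (ha.norm_apply_le j k) (hb.norm_apply_le j k) (norm_nonneg _) (by positivity)
        _ = x j * x k := by ring
  calc (2 * ∑ j, a j j * b j j - ∑ j, ∑ k, a j k * b j k).re
      = ∑ j, ∑ k, ((if j = k then 2 * (a j j * b j j).re else 0) - (a j k * b j k).re) := by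
        simp [Finset.sum_sub_distrib, Finset.mul_sum, Complex.re_sum]
    _ ≤ ∑ j, ∑ k, x j * x k := Finset.sum_le_sum fun j _ => Finset.sum_le_sum fun k _ => hterm j k
    _ = (∑ j, √(a j j).re * √(b j j).re) ^ 2 := by rw [sq, Finset.sum_mul_sum]
    _ ≤ (∑ j, √(a j j).re ^ 2) * (∑ j, √(b j j).re ^ 2) := Finset.sum_mul_sq_le_sq_mul_sq _ _ _
    _ = a.trace.re * b.trace.re := by
        simp [Matrix.trace, Complex.re_sum, Real.sq_sqrt, (Complex.nonneg_iff.mp ha.diag_nonneg).1,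
          (Complex.nonneg_iff.mp hb.diag_nonneg).1]

end PosSemidef

section Qutrit

def omega3 : ℂ := Complex.exp (2 * Real.pi * Complex.I / 3)

lemma isPrimitiveRoot_omega3 : IsPrimitiveRoot omega3 3 := by
  simpa [omega3] using Complex.isPrimitiveRoot_exp 3 (by norm_num)

lemma conj_omega3 : starRingEnd ℂ omega3 = omega3 ^ 2 := by
  have hnorm : ‖omega3‖ = 1 := isPrimitiveRoot_omega3.norm'_eq_one (by norm_num)
  rw [← Complex.inv_eq_conj hnorm]
  refine (eq_inv_of_mul_eq_one_left ?_).symm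
  rw [← pow_succ, isPrimitiveRoot_omega3.pow_eq_one]

lemma sum_omega3_pow_mul_conj (j k : Fin 3) :
    ∑ m : Fin 3, omega3 ^ (j.val * m.val) * starRingEnd ℂ (omega3 ^ (k.val * m.val)) =
      if j = k then 3 else 0 := by
  have hz (m : ℕ) : omega3 ^ (j.val * m) * starRingEnd ℂ (omega3 ^ (k.val * m)) =
      (omega3 ^ (j.val + 2 * k.val)) ^ m := by
    rw [map_pow, conj_omega3]; ring
  have hone : omega3 ^ (j.val + 2 * k.val) = 1 ↔ j = k := by
    rw [isPrimitiveRoot_omega3.pow_eq_one_iff_dvd]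
    omega
  simp only [hz, Fin.sum_univ_eq_sum_range (fun m => (omega3 ^ (j.val + 2 * k.val)) ^ m)]
  split_ifs with hjk
  · simp [hone.mpr hjk]
  · rw [geom_sum_eq (mt hone.mp hjk), ← pow_mul, mul_comm, pow_mul,
      isPrimitiveRoot_omega3.pow_eq_one, one_pow, sub_self, zero_div]

lemma weyl_three_zero (n : Fin 3) :
    weyl 3 n 0 = diagonal fun k => omega3 ^ (k.val * n.val) := by
  ext k l
  simp only [weyl, of_apply, add_zero, diagonal_apply, eq_comm (a := l)]
  split_ifs
  · rw [omega3, ← Complex.exp_nat_mul]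
    congr 1
    push_cast
    ring
  · rfl

lemma bellP_apply_zero (n : Fin 3) (p q : Fin 3 × Fin 3) :
    bellP n 0 p q = omega3 ^ (p.1.val * n.val) * starRingEnd ℂ (omega3 ^ (q.1.val * n.val)) *
      projPhiPlus3 p q := by
  rw [bellP, weyl_three_zero, ← diagonal_one, diagonal_kronecker_diagonal, diagonal_conjTranspose,
    mul_diagonal, diagonal_mul]
  simp
  ring

def projDiag : Matrix (Fin 3 × Fin 3) (Fin 3 × Fin 3) ℂ :=
  diagonal fun p => if p.1 = p.2 then 1 else 0

lemma sum_bellP_zero : ∑ n, bellP n 0 = projDiag := by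
  ext ⟨j, j'⟩ ⟨k, k'⟩
  simp only [Matrix.sum_apply, bellP_apply_zero, ← Finset.sum_mul, sum_omega3_pow_mul_conj,
    projPhiPlus3_apply, projDiag, diagonal_apply, Prod.mk.injEq]
  split_ifs <;> grind

lemma rhoFam_gamma_zero (α β : ℝ) :
    rhoFam α β 0 = (((1 - α - β) / 9 : ℝ) : ℂ) • 1 + (α : ℂ) • projPhiPlus3 +
      ((β / 2 : ℝ) : ℂ) • (projDiag - projPhiPlus3) := by
  rw [rhoFam, ← sum_bellP_zero, Fin.sum_univ_three, bellP_zero_zero,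
    add_assoc projPhiPlus3, add_sub_cancel_left]
  simp

def witness : Matrix (Fin 3 × Fin 3) (Fin 3 × Fin 3) ℂ :=
  (2 : ℂ) • projDiag - (3 : ℂ) • projPhiPlus3 - (1 / 3 : ℂ) • 1

lemma witness_isHermitian : witness.IsHermitian := by
  have hDiag : projDiag.IsHermitian :=
    isHermitian_diagonal_of_self_adjoint _ (by ext p; simp [apply_ite])
  have hPhi : projPhiPlus3.IsHermitian := (posSemidef_vecMulVec_self_star phiPlus3).isHermitian
  exact ((hDiag.smul (by simp [IsSelfAdjoint])).sub (hPhi.smul (by simp [IsSelfAdjoint]))).sub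
    (isHermitian_one.smul (by simp [IsSelfAdjoint]))

lemma trace_witness_mul (X : Matrix (Fin 3 × Fin 3) (Fin 3 × Fin 3) ℂ) :
    (witness * X).trace =
      2 * ∑ j, X (j, j) (j, j) - ∑ j, ∑ k, X (j, j) (k, k) - X.trace / 3 := by
  simp [witness, sub_mul, Matrix.trace, Matrix.mul_apply, projDiag, projPhiPlus3_apply,
    Fintype.sum_prod_type, Fin.sum_univ_three]
  ring

lemma hsInner_witness (X : Matrix (Fin 3 × Fin 3) (Fin 3 × Fin 3) ℂ) :
    hsInner witness X = 2 * ∑ j, X (j, j) (j, j) - ∑ j, ∑ k, X (j, j) (k, k) - X.trace / 3 := by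
  rw [hsInner, witness_isHermitian.eq, trace_witness_mul]

lemma hsNorm_witness : hsNorm witness = 2 * √2 := by
  have h8 : (witnessᴴ * witness).trace = 8 := by
    rw [witness_isHermitian.eq, trace_witness_mul]
    simp [witness, Matrix.trace, projDiag, projPhiPlus3_apply, Fintype.sum_prod_type,
      Fin.sum_univ_three, Matrix.one_apply, -Finset.sum_boole]
    norm_num
  rw [hsNorm, h8, show ((8 : ℂ)).re = 2 ^ 2 * 2 by norm_num, Real.sqrt_mul (by norm_num),
    Real.sqrt_sq (by norm_num)]

lemma hsInner_witness_rhoFam (α β : ℝ) :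
    hsInner witness (rhoFam α β 0) = ((5 * β - 4 * α) / 3 : ℝ) := by
  rw [hsInner_witness, rhoFam_gamma_zero]
  simp [Matrix.trace, projDiag, projPhiPlus3_apply, Fintype.sum_prod_type, Fin.sum_univ_three]
  ring

lemma re_hsInner_witness_kronecker_le {a b : Matrix (Fin 3) (Fin 3) ℂ} (ha : IsDensityMatrix a)
    (hb : IsDensityMatrix b) : (hsInner witness (a ⊗ₖ b)).re ≤ 2 / 3 := by
  have h := ha.2.1.re_two_sum_diag_mul_sub_sum_mul_le hb.2.1
  rw [ha.2.2, hb.2.2] at h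
  rw [hsInner_witness, trace_kronecker, ha.2.2, hb.2.2]
  simp only [kroneckerMap_apply, Complex.sub_re] at h ⊢
  norm_num at h ⊢
  linarith

end Qutrit

theorem stmt12_general (α β : ℝ) :
    (∀ σ : Matrix (Fin 3 × Fin 3) (Fin 3 × Fin 3) ℂ, IsSepState σ →
      Real.sqrt 2 / 3 * (5 * β / 4 - α - 1 / 2) ≤ hsNorm (σ - rhoFam α β 0)) ∧
    (α + 1 / 2 < 5 * β / 4 → ¬ IsSepState (rhoFam α β 0)) := by
  have hsqrt2 : √2 * √2 = 2 := Real.mul_self_sqrt (by norm_num)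
  have bound (σ : Matrix (Fin 3 × Fin 3) (Fin 3 × Fin 3) ℂ) (hσ : IsSepState σ) :
      Real.sqrt 2 / 3 * (5 * β / 4 - α - 1 / 2) ≤ hsNorm (σ - rhoFam α β 0) := by
    have h := hσ.re_hsInner_sub_le_hsNorm_mul (fun _ _ => re_hsInner_witness_kronecker_le)
      (rhoFam α β 0)
    rw [hsInner_witness_rhoFam, Complex.ofReal_re, hsNorm_witness] at h
    calc √2 / 3 * (5 * β / 4 - α - 1 / 2) = √2 / 4 * ((5 * β - 4 * α) / 3 - 2 / 3) := by ring
      _ ≤ √2 / 4 * (2 * √2 * hsNorm (σ - rhoFam α β 0)) :=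
        mul_le_mul_of_nonneg_left h (by positivity)
      _ = hsNorm (σ - rhoFam α β 0) := by
        linear_combination hsNorm (σ - rhoFam α β 0) / 2 * hsqrt2
  refine ⟨bound, fun hlt hρ => ?_⟩
  have h := bound _ hρ
  rw [sub_self, show hsNorm (0 : Matrix (Fin 3 × Fin 3) (Fin 3 × Fin 3) ℂ) = 0 by simp [hsNorm]]
    at h
  exact h.not_gt (mul_pos (by positivity) (by linarith))

/-- Hilbert–Schmidt measure in region II: every separable state is at distance at least
(√2/3)(5β/4 − α − 1/2) from ρ_{α,β,0}; strict inequality forces entanglement. -/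
theorem stmt12 (α β : ℝ) (h : α + 1 / 2 ≤ 5 * β / 4) :
    (∀ σ : Matrix (Fin 3 × Fin 3) (Fin 3 × Fin 3) ℂ, IsSepState σ →
      Real.sqrt 2 / 3 * (5 * β / 4 - α - 1 / 2) ≤ hsNorm (σ - rhoFam α β 0)) ∧
    (α + 1 / 2 < 5 * β / 4 → ¬ IsSepState (rhoFam α β 0)) :=
  stmt12_general α β

end
end

section
/- For every real b with 0 ≤ b ≤ 5, the partial transpose of the Horodecki state ρ_b is positive semidefinite if and only if 1 ≤ b ≤ 4; that is, ρ_b is PPT exactly for 1 ≤ b ≤ 4 and NPT (entangled) for 0 ≤ b < 1 and 4 < b ≤ 5. -/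
open Matrix Complex
open scoped Matrix Kronecker ComplexOrder

noncomputable section

/-!
The partial transpose of `ρ_b` is `(2 F + b P₊ + (5 - b) P₋) / 21`, where `F` is the swap of the two
qutrits and `P₊`, `P₋` are the diagonal projections onto the `|i, i+1⟩` and `|i+1, i⟩`. It is
block diagonal: `2` on each `|i, i⟩`, and the same `2 × 2` block `[[b, 2], [2, 5 - b]]` on each
plane spanned by `|i, i+1⟩, |i+1, i⟩`. So it is positive semidefinite iff that block is, i.e. iff
`b (5 - b) ≥ 4`, i.e. iff `1 ≤ b ≤ 4`. Necessity is the determinant of one block; sufficiency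
holds because `[[b, 2], [2, 5 - b]] = (4 - b)/3 · (1, 2)(1, 2)ᵀ + (b - 1)/3 · (2, 1)(2, 1)ᵀ`.
-/

lemma projPhiPlus3_apply_s14 (i j k l : Fin 3) :
    projPhiPlus3 (i, j) (k, l) = if i = j ∧ k = l then 1 / 3 else 0 := by
  have h3 : (Real.sqrt 3 : ℂ) ^ 2 = 3 := by
    rw [← Complex.ofReal_pow, Real.sq_sqrt (by norm_num)]; norm_num
  by_cases hij : i = j <;> by_cases hkl : k = l <;>
    simp [projPhiPlus3, vecMulVec_apply, phiPlus3, hij, hkl, ← sq, h3]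

lemma ptB_horodecki_apply (b : ℝ) (i j k l : Fin 3) :
    ptB (horodecki b) (i, j) (k, l) =
      ((if i = l ∧ k = j then 2 else 0) + (if i = k ∧ j = l ∧ j = i + 1 then b else 0) +
        (if i = k ∧ j = l ∧ i = j + 1 then 5 - b else 0) : ℝ) / 21 := by
  fin_cases i <;> fin_cases j <;> fin_cases k <;> fin_cases l <;>
    simp [ptB, horodecki, projPhiPlus3_apply_s14, sigmaPlus, sigmaMinus] <;> ring

def pairVec (x y : ℂ) (i : Fin 3) : Fin 3 × Fin 3 → ℂ :=
  Pi.single (i, i + 1) x + Pi.single (i + 1, i) y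

lemma ptB_horodecki_eq (b : ℝ) :
    (21 : ℂ) • ptB (horodecki b) =
      diagonal (fun p => if p.1 = p.2 then 2 else 0) +
        ∑ i, ((((4 - b) / 3 : ℝ) : ℂ) • vecMulVec (pairVec 1 2 i) (star (pairVec 1 2 i)) +
          (((b - 1) / 3 : ℝ) : ℂ) • vecMulVec (pairVec 2 1 i) (star (pairVec 2 1 i))) := by
  ext ⟨i, j⟩ ⟨k, l⟩
  fin_cases i <;> fin_cases j <;> fin_cases k <;> fin_cases l <;>
    simp [ptB_horodecki_apply, pairVec, vecMulVec_apply, Fin.sum_univ_three] <;>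
    ring

lemma det_ptB_horodecki_submatrix (b : ℝ) :
    ((ptB (horodecki b)).submatrix ![(0, 1), (1, 0)] ![(0, 1), (1, 0)]).det =
      ((b * (5 - b) - 4) / 441 : ℝ) := by
  rw [det_fin_two]
  simp [ptB_horodecki_apply]
  ring

lemma posSemidef_ptB_horodecki {b : ℝ} (hb1 : 1 ≤ b) (hb4 : b ≤ 4) :
    (ptB (horodecki b)).PosSemidef := by
  have hscale : ptB (horodecki b) = ((1 / 21 : ℝ) : ℂ) • ((21 : ℂ) • ptB (horodecki b)) := by
    rw [smul_smul]; norm_num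
  have hcoeff {c : ℝ} (hc : 0 ≤ c) : (0 : ℂ) ≤ ((c / 3 : ℝ) : ℂ) :=
    Complex.zero_le_real.mpr (by positivity)
  rw [hscale, ptB_horodecki_eq]
  refine .smul (.add (.diagonal fun p => ?_) (posSemidef_sum _ fun i _ => .add ?_ ?_))
    (Complex.zero_le_real.mpr (by norm_num))
  · dsimp only; split_ifs <;> norm_num
  · exact (posSemidef_vecMulVec_self_star _).smul (hcoeff (by linarith))
  · exact (posSemidef_vecMulVec_self_star _).smul (hcoeff (by linarith))

lemma four_le_mul_of_posSemidef_ptB_horodecki {b : ℝ} (h : (ptB (horodecki b)).PosSemidef) :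
    4 ≤ b * (5 - b) := by
  have hdet := (h.submatrix ![(0, 1), (1, 0)]).det_nonneg
  rw [det_ptB_horodecki_submatrix, Complex.zero_le_real] at hdet
  linarith

theorem stmt14_general (b : ℝ) :
    (ptB (horodecki b)).PosSemidef ↔ (1 ≤ b ∧ b ≤ 4) := by
  refine ⟨fun h => ?_, fun ⟨hb1, hb4⟩ => posSemidef_ptB_horodecki hb1 hb4⟩
  have := four_le_mul_of_posSemidef_ptB_horodecki h
  constructor <;> nlinarith

/-- The Horodecki state ρ_b is PPT exactly for 1 ≤ b ≤ 4. -/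
theorem stmt14 (b : ℝ) (hb0 : 0 ≤ b) (hb5 : b ≤ 5) :
    (ptB (horodecki b)).PosSemidef ↔ (1 ≤ b ∧ b ≤ 4) :=
  stmt14_general b

end
end

section
/- Let ρ be a D×D density matrix, and for 0 ≤ t ≤ 1 set ρ_t := t·ρ + ((1−t)/D)·1_D. For 0 ≤ λ < 1 define C_λ := ρ_λ − ρ − Re⟨ρ_λ, ρ_λ − ρ⟩·1_D. Then for all λ, μ with 0 ≤ λ < μ ≤ 1, Re Tr(ρ_μ · C_λ) = −(μ − λ)(1 − λ)·‖ρ − (1/D)·1_D‖². In particular, if ρ ≠ (1/D)·1_D then Re Tr(ρ_μ · C_λ) < 0 for all λ < μ ≤ 1, so if C_λ is an entanglement witness then all states ρ_μ with λ < μ ≤ 1 are detected as entangled. -/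
/-! Write `ρ_t = 1/D + t Δ` with `Δ = ρ - 1/D`, a traceless Hermitian matrix. Then
`ρ_λ - ρ = (λ - 1) Δ` and `⟨ρ_λ, ρ_λ - ρ⟩ = λ(λ - 1)‖Δ‖²`, so `C_λ = (λ - 1) Δ - λ(λ - 1)‖Δ‖²`.
Because `Tr Δ = 0`, the trace of a product `(a + b Δ)(c + d Δ)` has no cross terms and equals
`a c D + b d ‖Δ‖²`; with `a = 1/D` this gives `Tr(ρ_μ C_λ) = (λ - 1)(μ - λ)‖Δ‖²`. -/

open Matrix Complex
open scoped Matrix Kronecker ComplexOrder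

noncomputable section

section

variable {n : Type*} [Fintype n]

theorem trace_conjTranspose_mul_self_eq_hsNorm_sq (A : Matrix n n ℂ) :
    (Aᴴ * A).trace = ((hsNorm A ^ 2 : ℝ) : ℂ) := by
  obtain ⟨hre, him⟩ := Complex.nonneg_iff.mp (posSemidef_conjTranspose_mul_self A).trace_nonneg
  rw [hsNorm, Real.sq_sqrt hre]
  exact Complex.ext rfl him.symm

theorem hsNorm_pos {A : Matrix n n ℂ} (hA : A ≠ 0) : 0 < hsNorm A := by
  have hpos : 0 < (Aᴴ * A).trace :=
    (posSemidef_conjTranspose_mul_self A).trace_nonneg.lt_of_ne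
      (Ne.symm (trace_conjTranspose_mul_self_eq_zero_iff.not.mpr hA))
  exact Real.sqrt_pos.mpr (Complex.pos_iff.mp hpos).1

variable [DecidableEq n]

theorem IsDensityMatrix.card_ne_zero {ρ : Matrix n n ℂ} (hρ : IsDensityMatrix ρ) :
    Fintype.card n ≠ 0 := by
  intro h
  have : IsEmpty n := Fintype.card_eq_zero_iff.mp h
  simpa [Matrix.trace] using hρ.2.2

theorem IsDensityMatrix.trace_sub_smul_one_eq_zero {ρ : Matrix n n ℂ} (hρ : IsDensityMatrix ρ) :
    (ρ - ((1 / Fintype.card n : ℝ) : ℂ) • 1).trace = 0 := by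
  have hcard : (Fintype.card n : ℂ) ≠ 0 := Nat.cast_ne_zero.mpr hρ.card_ne_zero
  simp [trace_sub, trace_smul, hρ.2.2, hcard]

theorem trace_smul_one_add_smul_mul {Δ : Matrix n n ℂ} (hΔ : Δ.trace = 0) (a b c d : ℂ) :
    ((a • 1 + b • Δ) * (c • 1 + d • Δ)).trace
      = a * c * Fintype.card n + b * d * (Δ * Δ).trace := by
  simp only [Matrix.add_mul, Matrix.mul_add, Matrix.smul_mul, Matrix.mul_smul, Matrix.one_mul,
    Matrix.mul_one, trace_add, trace_smul, trace_one, hΔ, smul_eq_mul]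
  ring

def geometricWitness (σ ρ : Matrix n n ℂ) : Matrix n n ℂ :=
  σ - ρ - (((hsInner σ (σ - ρ)).re : ℝ) : ℂ) • 1

theorem re_trace_mul_geometricWitness {Δ : Matrix n n ℂ} (hH : Δᴴ = Δ) (htr : Δ.trace = 0)
    {c : ℝ} (hc : c * Fintype.card n = 1) (l μ : ℝ) :
    (((c : ℂ) • 1 + (μ : ℂ) • Δ) *
        geometricWitness ((c : ℂ) • 1 + (l : ℂ) • Δ) ((c : ℂ) • 1 + ((1 : ℝ) : ℂ) • Δ)).trace.re
      = -((μ - l) * (1 - l)) * hsNorm Δ ^ 2 := by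
  have hsq : (Δ * Δ).trace = ((hsNorm Δ ^ 2 : ℝ) : ℂ) := by
    rw [← trace_conjTranspose_mul_self_eq_hsNorm_sq, hH]
  have hdiff : (c : ℂ) • 1 + (l : ℂ) • Δ - ((c : ℂ) • 1 + ((1 : ℝ) : ℂ) • Δ)
      = (0 : ℂ) • 1 + ((l - 1 : ℝ) : ℂ) • Δ := by
    push_cast; module
  have hadj : ((c : ℂ) • 1 + (l : ℂ) • Δ)ᴴ = (c : ℂ) • 1 + (l : ℂ) • Δ := by
    simp [conjTranspose_smul, hH]
  have hinner : (hsInner ((c : ℂ) • 1 + (l : ℂ) • Δ)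
      ((c : ℂ) • 1 + (l : ℂ) • Δ - ((c : ℂ) • 1 + ((1 : ℝ) : ℂ) • Δ))).re
      = l * (l - 1) * hsNorm Δ ^ 2 := by
    rw [hsInner, hadj, hdiff, trace_smul_one_add_smul_mul htr, hsq, mul_zero, zero_mul, zero_add,
      ← ofReal_mul, ← ofReal_mul, ofReal_re]
  have hwit : geometricWitness ((c : ℂ) • 1 + (l : ℂ) • Δ) ((c : ℂ) • 1 + ((1 : ℝ) : ℂ) • Δ)
      = ((-(l * (l - 1) * hsNorm Δ ^ 2) : ℝ) : ℂ) • 1 + ((l - 1 : ℝ) : ℂ) • Δ := by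
    rw [geometricWitness, hinner, hdiff]
    push_cast; module
  rw [hwit, trace_smul_one_add_smul_mul htr, hsq]
  have hc' : (c : ℂ) * Fintype.card n = 1 := by exact_mod_cast hc
  rw [← ofReal_re (-((μ - l) * (1 - l)) * hsNorm Δ ^ 2)]
  congr 1
  push_cast
  linear_combination (-((l : ℂ) * (l - 1) * hsNorm Δ ^ 2)) * hc'

end

theorem stmt15_general (D : ℕ) (ρ : Matrix (Fin D) (Fin D) ℂ)
    (hρ : IsDensityMatrix ρ)
    (rhoLine : ℝ → Matrix (Fin D) (Fin D) ℂ)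
    (hline : ∀ t : ℝ, rhoLine t = (t : ℂ) • ρ + (((1 - t) / D : ℝ) : ℂ) • 1)
    (Cop : ℝ → Matrix (Fin D) (Fin D) ℂ)
    (hC : ∀ l : ℝ, Cop l
      = rhoLine l - ρ - (((hsInner (rhoLine l) (rhoLine l - ρ)).re : ℝ) : ℂ) • 1) :
    (∀ l μ : ℝ, 0 ≤ l → l < μ → μ ≤ 1 →
      ((rhoLine μ * Cop l).trace).re
        = -((μ - l) * (1 - l)) * (hsNorm (ρ - ((1 / D : ℝ) : ℂ) • 1)) ^ 2) ∧
    (ρ ≠ ((1 / D : ℝ) : ℂ) • 1 → ∀ l μ : ℝ, 0 ≤ l → l < μ → μ ≤ 1 →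
      ((rhoLine μ * Cop l).trace).re < 0) := by
  set Δ := ρ - ((1 / D : ℝ) : ℂ) • 1 with hΔ
  have hH : Δᴴ = Δ := (hρ.1.sub (isHermitian_one.smul (conj_ofReal _))).eq
  have htr : Δ.trace = 0 := by simpa only [Fintype.card_fin] using hρ.trace_sub_smul_one_eq_zero
  have hc : (1 / D : ℝ) * Fintype.card (Fin D) = 1 := by
    have hD : (D : ℝ) ≠ 0 := by
      simpa only [Fintype.card_fin, Nat.cast_ne_zero] using hρ.card_ne_zero
    rw [Fintype.card_fin, one_div_mul_cancel hD]
  have hsegment : ∀ t : ℝ, rhoLine t = ((1 / D : ℝ) : ℂ) • 1 + (t : ℂ) • Δ := by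
    intro t
    rw [hline, hΔ]
    push_cast
    module
  have hρΔ : ρ = ((1 / D : ℝ) : ℂ) • 1 + ((1 : ℝ) : ℂ) • Δ := by
    rw [hΔ]
    module
  have hwitness : ∀ l, Cop l = geometricWitness (rhoLine l) ρ := hC
  have hexpect : ∀ l μ : ℝ,
      (rhoLine μ * Cop l).trace.re = -((μ - l) * (1 - l)) * hsNorm Δ ^ 2 := by
    intro l μ
    rw [hwitness, hρΔ, hsegment, hsegment]
    exact re_trace_mul_geometricWitness hH htr hc l μ
  refine ⟨fun l μ _ _ _ => hexpect l μ, fun hne l μ _ hlμ hμ => ?_⟩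
  rw [hexpect, neg_mul, neg_lt_zero]
  have hΔpos : 0 < hsNorm Δ := hsNorm_pos (sub_ne_zero.mpr hne)
  have hgap : 0 < (μ - l) * (1 - l) := mul_pos (by linarith) (by linarith)
  exact mul_pos hgap (pow_pos hΔpos 2)

/-- Along the line from ρ to the maximally mixed state, the geometric operator C_λ has
strictly negative expectation value on all states ρ_μ with μ > λ. -/
theorem stmt15 (D : ℕ) (hD : 0 < D) (ρ : Matrix (Fin D) (Fin D) ℂ)
    (hρ : IsDensityMatrix ρ)
    (rhoLine : ℝ → Matrix (Fin D) (Fin D) ℂ)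
    (hline : ∀ t : ℝ, rhoLine t = (t : ℂ) • ρ + (((1 - t) / D : ℝ) : ℂ) • 1)
    (Cop : ℝ → Matrix (Fin D) (Fin D) ℂ)
    (hC : ∀ l : ℝ, Cop l
      = rhoLine l - ρ - (((hsInner (rhoLine l) (rhoLine l - ρ)).re : ℝ) : ℂ) • 1) :
    (∀ l μ : ℝ, 0 ≤ l → l < μ → μ ≤ 1 →
      ((rhoLine μ * Cop l).trace).re
        = -((μ - l) * (1 - l)) * (hsNorm (ρ - ((1 / D : ℝ) : ℂ) • 1)) ^ 2) ∧
    (ρ ≠ ((1 / D : ℝ) : ℂ) • 1 → ∀ l μ : ℝ, 0 ≤ l → l < μ → μ ≤ 1 →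
      ((rhoLine μ * Cop l).trace).re < 0) :=
  stmt15_general D ρ hρ rhoLine hline Cop hC

end
end
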